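/- arXiv:math/0411497 — 2 statements merged into one kernel-verified Lean document; each statement's English description precedes it below -/
import Mathlib

section
/- Let k be a field containing an element j with j^2 - j + 1 = 0, and let x, y generate the free associative algebra k⟨x,y⟩. Then the element y·x·y·x^2 - j^2·x^3·y^2 + x^2·y·x·y - x·y·x·y·x belongs to the two-sided ideal generated by x·y^2 + y·x·y + y^2·x and x^3·y + j·y·x^3. -/
theorem stmt_17 (k : Type*) [Field k] (j : k) (hj : j^2 - j + 1 = 0)
    (x y : FreeAlgebra k (Fin 2))
    (hx : x = FreeAlgebra.ι k 0) (hy : y = FreeAlgebra.ι k 1) :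
    y * x * y * x^2 - algebraMap k (FreeAlgebra k (Fin 2)) (j^2) * (x^3 * y^2)
      + x^2 * y * x * y - x * y * x * y * x ∈
    TwoSidedIdeal.span
      {x * y^2 + y * x * y + y^2 * x,
       x^3 * y + algebraMap k (FreeAlgebra k (Fin 2)) j * (y * x^3)} := by
  set f := x * y^2 + y * x * y + y^2 * x with hf
  set g := x^3 * y + algebraMap k (FreeAlgebra k (Fin 2)) j * (y * x^3) with hg
  have hfI : f ∈ TwoSidedIdeal.span {f, g} :=
    TwoSidedIdeal.subset_span (by left; rfl)
  have hgI : g ∈ TwoSidedIdeal.span {f, g} :=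
    TwoSidedIdeal.subset_span (by right; rfl)
  have key : y * x * y * x^2 - algebraMap k (FreeAlgebra k (Fin 2)) (j^2) * (x^3 * y^2)
      + x^2 * y * x * y - x * y * x * y * x
      = x^2 * f - x * f * x + f * x^2
        - algebraMap k (FreeAlgebra k (Fin 2)) j * (g * y)
        + algebraMap k (FreeAlgebra k (Fin 2)) (j^2) * (y * g) := by
    simp only [hf, hg, ← Algebra.smul_def]
    simp only [pow_succ, pow_zero, one_mul, mul_add, add_mul, sub_mul, mul_sub, smul_add, smul_sub,
      mul_smul_comm, smul_mul_assoc, smul_smul, mul_assoc]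
    match_scalars <;> ring_nf
    · linear_combination -hj
    · linear_combination (-(j+1))*hj
  rw [key]
  refine add_mem (sub_mem (add_mem (sub_mem ?_ ?_) ?_) ?_) ?_
  · exact TwoSidedIdeal.mul_mem_left _ _ _ hfI
  · exact TwoSidedIdeal.mul_mem_right _ _ _ (TwoSidedIdeal.mul_mem_left _ _ _ hfI)
  · exact TwoSidedIdeal.mul_mem_right _ _ _ hfI
  · exact TwoSidedIdeal.mul_mem_left _ _ _ (TwoSidedIdeal.mul_mem_right _ _ _ hgI)
  · exact TwoSidedIdeal.mul_mem_left _ _ _ (TwoSidedIdeal.mul_mem_left _ _ _ hgI)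
end

section
/- Let n ≥ 2 and l be integers, set v = 2n - 2, and suppose n_1 ≤ n_2 ≤ ... ≤ n_v are integers with 2 ≤ n_s ≤ l - 2 for all s, satisfying n_s + n_{v-s+1} = l for all s and the sum over s from 1 to n-1 of n_{v-s+1}·n_s equals (l-1)·n. If additionally n ≥ 3, then l ≤ 3 + 2/(n-2), i.e., (n-2)·l ≤ 3n - 4. -/
theorem stmt_18 (n : ℕ) (l : ℤ) (hn : 2 ≤ n) (v : ℕ) (hv : v = 2 * n - 2)
    (ns : ℕ → ℤ)
    (hmono : ∀ s : ℕ, 1 ≤ s → s < v → ns s ≤ ns (s + 1))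
    (hbound : ∀ s : ℕ, 1 ≤ s → s ≤ v → 2 ≤ ns s ∧ ns s ≤ l - 2)
    (hsym : ∀ s : ℕ, 1 ≤ s → s ≤ v → ns s + ns (v - s + 1) = l)
    (hsum : ∑ s ∈ Finset.Icc 1 (n - 1), ns (v - s + 1) * ns s = (l - 1) * n)
    (hn3 : 3 ≤ n) :
    ((n : ℤ) - 2) * l ≤ 3 * n - 4 := by
  have key : ∀ s ∈ Finset.Icc 1 (n - 1), (2 * (l - 2) : ℤ) ≤ ns (v - s + 1) * ns s := by
    intro s hs
    rw [Finset.mem_Icc] at hs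
    have h1 : 1 ≤ s := hs.1
    have h2 : s ≤ v := by omega
    obtain ⟨hb1, hb2⟩ := hbound s h1 h2
    have hsy := hsym s h1 h2
    nlinarith [hb1, hb2, hsy]
  have hcard : (Finset.Icc 1 (n - 1)).card = n - 1 := by
    rw [Nat.card_Icc]; omega
  have hge : ((n - 1 : ℕ) : ℤ) * (2 * (l - 2)) ≤ (l - 1) * n := by
    rw [← hsum, ← hcard]
    have := Finset.card_nsmul_le_sum (Finset.Icc 1 (n - 1))
      (fun s => ns (v - s + 1) * ns s) (2 * (l - 2)) key
    simpa [nsmul_eq_mul] using this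
  have hcast : ((n - 1 : ℕ) : ℤ) = (n : ℤ) - 1 := by
    have : (1 : ℕ) ≤ n := by omega
    push_cast [this]; ring
  rw [hcast] at hge
  have hn3' : (3 : ℤ) ≤ (n : ℤ) := by exact_mod_cast hn3
  nlinarith [hge, hn3']
end
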